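/- Let N > 100 and let (x_1, …, x_N) be the unique strictly decreasing zero-mean solution of the MIW recursion. Then for all integers l, j with 1 ≤ l < j ≤ ⌊m/e³⌋, x_l² − x_j² ≥ (4/9)·log(j/l). -/

import Mathlib

noncomputable section

/-- Partial sums `S_n = x_1 + ⋯ + x_n`. -/
def Ssum (x : ℕ → ℝ) (n : ℕ) : ℝ := ∑ i ∈ Finset.Icc 1 n, x i

/-- `x` is a solution of the MIW recursion
`x_{n+1} = x_n - 1/(x_1 + ⋯ + x_n)` for `1 ≤ n ≤ N - 1`. -/
def IsMIW (N : ℕ) (x : ℕ → ℝ) : Prop :=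
  ∀ n, 1 ≤ n → n ≤ N - 1 → Ssum x n ≠ 0 ∧ x (n + 1) = x n - 1 / Ssum x n

/-- `m = (N+1)/2` if `N` is odd and `m = N/2` if `N` is even; in natural number
division both equal `(N+1)/2`. -/
def mIdx (N : ℕ) : ℕ := (N + 1) / 2

namespace MIWAux

open Finset Real

lemma Ssum_zero (x : ℕ → ℝ) : Ssum x 0 = 0 := by simp [Ssum]

lemma Ssum_succ (x : ℕ → ℝ) (n : ℕ) : Ssum x (n + 1) = Ssum x n + x (n + 1) :=
  Finset.sum_Icc_succ_top (Nat.le_add_left 1 n) x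

lemma Ssum_one (x : ℕ → ℝ) : Ssum x 1 = x 1 := by simp [Ssum]

variable {N : ℕ} {x : ℕ → ℝ}

/-- Monotonicity of the sequence. -/
lemma x_anti (hdec : ∀ n, 1 ≤ n → n < N → x (n + 1) < x n) :
    ∀ a b : ℕ, 1 ≤ a → a ≤ b → b ≤ N → x b ≤ x a := by
  intro a b ha hab hbN
  induction b with
  | zero => omega
  | succ b ih =>
    rcases Nat.lt_or_ge a (b + 1) with h | h
    · have h1 : x b ≤ x a := ih (by omega) (by omega)
      have h2 : x (b + 1) < x b := hdec b (by omega) (by omega)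
      linarith
    · have : a = b + 1 := by omega
      simp [this]

lemma Ssum_ge_card_mul (hdec : ∀ n, 1 ≤ n → n < N → x (n + 1) < x n)
    (n : ℕ) (hn : n ≤ N) : (n : ℝ) * x n ≤ Ssum x n := by
  have h : ∀ i ∈ Finset.Icc 1 n, x n ≤ x i := fun i hi => by
    rw [Finset.mem_Icc] at hi
    exact x_anti hdec i n hi.1 hi.2 hn
  calc (n : ℝ) * x n = ∑ _i ∈ Finset.Icc 1 n, x n := by
        rw [Finset.sum_const, Nat.card_Icc]
        simp
    _ ≤ ∑ i ∈ Finset.Icc 1 n, x i := Finset.sum_le_sum h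
    _ = Ssum x n := rfl

lemma tail_le (hdec : ∀ n, 1 ≤ n → n < N → x (n + 1) < x n)
    (n : ℕ) (hn : n + 1 ≤ N) :
    ∑ i ∈ Finset.Ioc n N, x i ≤ ((N : ℝ) - n) * x (n + 1) := by
  have h : ∀ i ∈ Finset.Ioc n N, x i ≤ x (n + 1) := fun i hi => by
    rw [Finset.mem_Ioc] at hi
    exact x_anti hdec (n + 1) i (by omega) (by omega) hi.2
  calc ∑ i ∈ Finset.Ioc n N, x i ≤ ∑ _i ∈ Finset.Ioc n N, x (n + 1) :=
        Finset.sum_le_sum h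
    _ = ((N : ℝ) - n) * x (n + 1) := by
        rw [Finset.sum_const, Nat.card_Ioc, nsmul_eq_mul,
          Nat.cast_sub (by omega : n ≤ N)]

lemma Ssum_split (x : ℕ → ℝ) (n : ℕ) (hn : n ≤ N) :
    Ssum x N = Ssum x n + ∑ i ∈ Finset.Ioc n N, x i := by
  unfold Ssum
  have e : ∀ k : ℕ, Finset.Icc 1 k = Finset.Ioc 0 k := fun k => Finset.Icc_add_one_left_eq_Ioc 0 k
  rw [e N, e n]
  exact (Finset.sum_Ioc_consecutive x (Nat.zero_le n) hn).symm

lemma Ssum_pos (hdec : ∀ n, 1 ≤ n → n < N → x (n + 1) < x n)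
    (hmean : Ssum x N = 0) :
    ∀ n, 1 ≤ n → n + 1 ≤ N → 0 < Ssum x n := by
  intro n h1 h2
  rcases lt_or_ge 0 (x n) with hx | hx
  · have := Ssum_ge_card_mul hdec n (by omega)
    have hn1 : (1 : ℝ) ≤ (n : ℝ) := by exact_mod_cast h1
    nlinarith
  · have hx1 : x (n + 1) < x n := hdec n h1 (by omega)
    have hsplit := Ssum_split (N := N) x n (by omega)
    have htail := tail_le hdec n h2
    have hcard : (1 : ℝ) ≤ (N : ℝ) - n := by
      have : (n : ℝ) + 1 ≤ (N : ℝ) := by exact_mod_cast h2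
      linarith
    nlinarith

lemma x_step (hMIW : IsMIW N x) (n : ℕ) (h1 : 1 ≤ n) (h2 : n + 1 ≤ N) :
    x (n + 1) = x n - 1 / Ssum x n :=
  (hMIW n h1 (by omega)).2

lemma sq_drop (hMIW : IsMIW N x) (hdec : ∀ n, 1 ≤ n → n < N → x (n + 1) < x n)
    (hmean : Ssum x N = 0) (n : ℕ) (h1 : 1 ≤ n) (h2 : n + 1 ≤ N) :
    x n ^ 2 - x (n + 1) ^ 2 = (x n + x (n + 1)) / Ssum x n := by
  have hS := Ssum_pos hdec hmean n h1 h2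
  have hstep := x_step hMIW n h1 h2
  have hgap : x n - x (n + 1) = 1 / Ssum x n := by rw [hstep]; ring
  have : x n ^ 2 - x (n + 1) ^ 2 = (x n + x (n + 1)) * (x n - x (n + 1)) := by ring
  rw [this, hgap, mul_one_div]

lemma sq_drop_le (hMIW : IsMIW N x) (hdec : ∀ n, 1 ≤ n → n < N → x (n + 1) < x n)
    (hmean : Ssum x N = 0) (n : ℕ) (h1 : 1 ≤ n) (h2 : n + 1 ≤ N) :
    x n ^ 2 - x (n + 1) ^ 2 ≤ 2 / n := by
  have hS := Ssum_pos hdec hmean n h1 h2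
  have hd := sq_drop hMIW hdec hmean n h1 h2
  have hn1 : (1 : ℝ) ≤ (n : ℝ) := by exact_mod_cast h1
  rcases le_or_gt (x n + x (n + 1)) 0 with hsum | hsum
  · have : (x n + x (n + 1)) / Ssum x n ≤ 0 := div_nonpos_iff.2 (Or.inr ⟨hsum, hS.le⟩)
    have h2n : (0 : ℝ) < 2 / n := by positivity
    linarith
  · have hxn1 : x (n + 1) < x n := hdec n h1 (by omega)
    have hxpos : 0 < x n := by linarith
    have hSn : (n : ℝ) * x n ≤ Ssum x n := Ssum_ge_card_mul hdec n (by omega)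
    rw [hd, div_le_div_iff₀ hS (by positivity)]
    nlinarith

lemma sumsq_le (hMIW : IsMIW N x) (hdec : ∀ n, 1 ≤ n → n < N → x (n + 1) < x n)
    (hmean : Ssum x N = 0) :
    ∀ n, 1 ≤ n → n + 1 ≤ N →
      ∑ i ∈ Finset.Icc 1 n, x i ^ 2 ≤ (n : ℝ) * x n ^ 2 + 2 * n - 2 := by
  intro n h1 h2
  induction n with
  | zero => omega
  | succ n ih =>
    rcases Nat.eq_or_lt_of_le h1 with h | h
    · simp [← h]
    · have hn1 : 1 ≤ n := by omega
      have hn2 : n + 1 ≤ N := by omega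
      have hIH := ih hn1 hn2
      have hdrop := sq_drop_le hMIW hdec hmean n hn1 hn2
      have hsplit : ∑ i ∈ Finset.Icc 1 (n + 1), x i ^ 2
          = (∑ i ∈ Finset.Icc 1 n, x i ^ 2) + x (n + 1) ^ 2 :=
        Finset.sum_Icc_succ_top (Nat.le_add_left 1 n) _
      have hnR : (1 : ℝ) ≤ (n : ℝ) := by exact_mod_cast hn1
      have hmul : (n : ℝ) * x n ^ 2 ≤ (n : ℝ) * x (n + 1) ^ 2 + 2 := by
        have h0 : (n : ℝ) * (x n ^ 2 - x (n + 1) ^ 2) ≤ (n : ℝ) * (2 / n) :=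
          mul_le_mul_of_nonneg_left hdrop (by positivity)
        have h1' : (n : ℝ) * (2 / n) = 2 := by field_simp
        nlinarith
      rw [hsplit]
      push_cast
      nlinarith

lemma Ssum_mul_x (hMIW : IsMIW N x) (hdec : ∀ n, 1 ≤ n → n < N → x (n + 1) < x n)
    (hmean : Ssum x N = 0) :
    ∀ n, 1 ≤ n → n ≤ N →
      Ssum x n * x n = (∑ i ∈ Finset.Icc 1 n, x i ^ 2) - n + 1 := by
  intro n h1 h2
  induction n with
  | zero => omega
  | succ n ih =>
    rcases Nat.eq_or_lt_of_le h1 with h | h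
    · rw [← h]
      simp [Ssum_one]
      ring
    · have hn1 : 1 ≤ n := by omega
      have hn2 : n + 1 ≤ N := by omega
      have hIH := ih hn1 (by omega)
      have hS := Ssum_pos hdec hmean n hn1 hn2
      have hstep := x_step hMIW n hn1 hn2
      have hsplit : ∑ i ∈ Finset.Icc 1 (n + 1), x i ^ 2
          = (∑ i ∈ Finset.Icc 1 n, x i ^ 2) + x (n + 1) ^ 2 :=
        Finset.sum_Icc_succ_top (Nat.le_add_left 1 n) _
      have hSin : Ssum x n * x (n + 1) = Ssum x n * x n - 1 := by
        rw [hstep]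
        field_simp
      rw [Ssum_succ, hsplit]
      push_cast
      nlinarith [hSin, hIH]

lemma total_sq (hMIW : IsMIW N x) (hdec : ∀ n, 1 ≤ n → n < N → x (n + 1) < x n)
    (hmean : Ssum x N = 0) (hN : 1 ≤ N) :
    ∑ i ∈ Finset.Icc 1 N, x i ^ 2 = (N : ℝ) - 1 := by
  have h := Ssum_mul_x hMIW hdec hmean N hN le_rfl
  rw [hmean] at h
  linarith

/-- Cauchy–Schwarz upper bound on the partial sum. -/
lemma Ssum_upper (hMIW : IsMIW N x) (hdec : ∀ n, 1 ≤ n → n < N → x (n + 1) < x n)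
    (hmean : Ssum x N = 0) (n : ℕ) (h1 : 1 ≤ n) (h2 : n + 1 ≤ N) (hxn : 0 ≤ x n) :
    Ssum x n ≤ (n : ℝ) * x n + Real.sqrt 2 * n := by
  have hterm : ∀ i ∈ Finset.Icc 1 n, 0 ≤ x i - x n := fun i hi => by
    rw [Finset.mem_Icc] at hi
    have := x_anti hdec i n hi.1 hi.2 (by omega)
    linarith
  have hsum : Ssum x n = (∑ i ∈ Finset.Icc 1 n, (x i - x n)) + (n : ℝ) * x n := by
    unfold Ssum
    rw [Finset.sum_sub_distrib, Finset.sum_const, Nat.card_Icc]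
    simp
  set A := ∑ i ∈ Finset.Icc 1 n, (x i - x n) with hA
  have hA0 : 0 ≤ A := Finset.sum_nonneg hterm
  have hCS : A ^ 2 ≤ (n : ℝ) * ∑ i ∈ Finset.Icc 1 n, (x i - x n) ^ 2 := by
    have := sq_sum_le_card_mul_sum_sq (s := Finset.Icc 1 n)
      (f := fun i => x i - x n)
    have hcard : (#(Finset.Icc 1 n) : ℝ) = (n : ℝ) := by
      rw [Nat.card_Icc]; simp
    rw [hcard] at this
    exact this
  have hterm2 : ∀ i ∈ Finset.Icc 1 n, (x i - x n) ^ 2 ≤ x i ^ 2 - x n ^ 2 := by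
    intro i hi
    have h0 := hterm i hi
    nlinarith
  have hsum2 : ∑ i ∈ Finset.Icc 1 n, (x i - x n) ^ 2
      ≤ ∑ i ∈ Finset.Icc 1 n, (x i ^ 2 - x n ^ 2) := Finset.sum_le_sum hterm2
  have hsum3 : ∑ i ∈ Finset.Icc 1 n, (x i ^ 2 - x n ^ 2)
      = (∑ i ∈ Finset.Icc 1 n, x i ^ 2) - (n : ℝ) * x n ^ 2 := by
    rw [Finset.sum_sub_distrib, Finset.sum_const, Nat.card_Icc]
    simp
  have hsq := sumsq_le hMIW hdec hmean n h1 h2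
  have hnR : (1 : ℝ) ≤ (n : ℝ) := by exact_mod_cast h1
  have hAsq : A ^ 2 ≤ 2 * (n : ℝ) ^ 2 := by nlinarith
  have hsqrt2 : Real.sqrt 2 ^ 2 = 2 := Real.sq_sqrt (by norm_num)
  have hsqrt0 : 0 ≤ Real.sqrt 2 := Real.sqrt_nonneg 2
  have hAle : A ≤ Real.sqrt 2 * n := by
    have e1 : A = Real.sqrt (A ^ 2) := (Real.sqrt_sq hA0).symm
    have e2 : Real.sqrt (A ^ 2) ≤ Real.sqrt (2 * (n : ℝ) ^ 2) := Real.sqrt_le_sqrt hAsq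
    have e3 : Real.sqrt (2 * (n : ℝ) ^ 2) = Real.sqrt 2 * n := by
      rw [Real.sqrt_mul (by norm_num : (0:ℝ) ≤ 2), Real.sqrt_sq (Nat.cast_nonneg n)]
    linarith [e1 ▸ e2, e3 ▸ e2]
  linarith [hsum, hAle]

/-- Strict comparison of two MIW-type evolutions. -/
lemma comp_strict (N : ℕ) (u v : ℕ → ℝ)
    (hu : ∀ n, 1 ≤ n → n + 1 ≤ N → 0 < Ssum u n ∧ u (n + 1) = u n - 1 / Ssum u n)
    (hv : ∀ n, 1 ≤ n → n + 1 ≤ N → 0 < Ssum v n ∧ v (n + 1) = v n - 1 / Ssum v n)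
    (h1 : u 1 < v 1) :
    ∀ n, 1 ≤ n → n ≤ N → u n < v n ∧ Ssum u n < Ssum v n := by
  intro n hn1 hnN
  induction n with
  | zero => omega
  | succ n ih =>
    rcases Nat.eq_or_lt_of_le hn1 with h | h
    · refine ⟨by rw [← h]; exact h1, ?_⟩
      have e : (1 : ℕ) = 0 + 1 := rfl
      rw [← h]
      rw [show Ssum u 1 = u 1 from Ssum_one u, show Ssum v 1 = v 1 from Ssum_one v]
      exact h1
    · have hn : 1 ≤ n := by omega
      have hnN' : n + 1 ≤ N := by omega
      obtain ⟨hx, hS⟩ := ih hn (by omega)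
      obtain ⟨hSu, hru⟩ := hu n hn hnN'
      obtain ⟨hSv, hrv⟩ := hv n hn hnN'
      have hinv : 1 / Ssum v n < 1 / Ssum u n := one_div_lt_one_div_of_lt hSu hS
      have hlt : u (n + 1) < v (n + 1) := by rw [hru, hrv]; linarith
      exact ⟨hlt, by rw [Ssum_succ, Ssum_succ]; linarith⟩

lemma comp_eq (N : ℕ) (u v : ℕ → ℝ)
    (hu : ∀ n, 1 ≤ n → n + 1 ≤ N → 0 < Ssum u n ∧ u (n + 1) = u n - 1 / Ssum u n)
    (hv : ∀ n, 1 ≤ n → n + 1 ≤ N → 0 < Ssum v n ∧ v (n + 1) = v n - 1 / Ssum v n)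
    (h1 : u 1 = v 1) :
    ∀ n, 1 ≤ n → n ≤ N → u n = v n ∧ Ssum u n = Ssum v n := by
  intro n hn1 hnN
  induction n with
  | zero => omega
  | succ n ih =>
    rcases Nat.eq_or_lt_of_le hn1 with h | h
    · rw [← h, show Ssum u 1 = u 1 from Ssum_one u, show Ssum v 1 = v 1 from Ssum_one v]
      exact ⟨h1, h1⟩
    · have hn : 1 ≤ n := by omega
      have hnN' : n + 1 ≤ N := by omega
      obtain ⟨hx, hS⟩ := ih hn (by omega)
      obtain ⟨hSu, hru⟩ := hu n hn hnN'
      obtain ⟨hSv, hrv⟩ := hv n hn hnN'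
      have hlt : u (n + 1) = v (n + 1) := by rw [hru, hrv, hx, hS]
      exact ⟨hlt, by rw [Ssum_succ, Ssum_succ, hlt, hS]⟩

/-- Reflection re-indexing of a sum. -/
lemma sum_reflect (f : ℕ → ℝ) (a N : ℕ) (ha : a ≤ N) :
    ∑ i ∈ Finset.Ioc a N, f i = ∑ j ∈ Finset.Icc 1 (N - a), f (N + 1 - j) := by
  apply Finset.sum_nbij' (fun i => N + 1 - i) (fun j => N + 1 - j)
  · intro i hi
    rw [Finset.mem_Ioc] at hi
    rw [Finset.mem_Icc]
    omega
  · intro j hj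
    rw [Finset.mem_Icc] at hj
    rw [Finset.mem_Ioc]
    omega
  · intro i hi
    rw [Finset.mem_Ioc] at hi
    omega
  · intro j hj
    rw [Finset.mem_Icc] at hj
    omega
  · intro i hi
    rw [Finset.mem_Ioc] at hi
    congr 1
    omega

/-- Antisymmetry of the solution. -/
lemma antisym (hN : 2 ≤ N) (hMIW : IsMIW N x)
    (hdec : ∀ n, 1 ≤ n → n < N → x (n + 1) < x n) (hmean : Ssum x N = 0) :
    ∀ n, 1 ≤ n → n ≤ N → x (N + 1 - n) = - x n := by
  set z : ℕ → ℝ := fun k => - x (N + 1 - k) with hz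
  have hzS : ∀ k, k ≤ N → Ssum z k = Ssum x (N - k) := by
    intro k hk
    have e1 : Ssum z k = - ∑ i ∈ Finset.Icc 1 k, x (N + 1 - i) := by
      unfold Ssum
      rw [← Finset.sum_neg_distrib]
    have e2 : ∑ i ∈ Finset.Ioc (N - k) N, x i
        = ∑ j ∈ Finset.Icc 1 (N - (N - k)), x (N + 1 - j) := sum_reflect x (N - k) N (by omega)
    have e3 : N - (N - k) = k := by omega
    have e4 : Ssum x N = Ssum x (N - k) + ∑ i ∈ Finset.Ioc (N - k) N, x i :=
      Ssum_split x (N - k) (by omega)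
    rw [hmean] at e4
    rw [e3] at e2
    rw [e2] at e4
    rw [e1]
    linarith
  have hxprop : ∀ n, 1 ≤ n → n + 1 ≤ N → 0 < Ssum x n ∧ x (n + 1) = x n - 1 / Ssum x n :=
    fun n h1 h2 => ⟨Ssum_pos hdec hmean n h1 h2, x_step hMIW n h1 h2⟩
  have hzprop : ∀ n, 1 ≤ n → n + 1 ≤ N → 0 < Ssum z n ∧ z (n + 1) = z n - 1 / Ssum z n := by
    intro n h1 h2
    have hS : Ssum z n = Ssum x (N - n) := hzS n (by omega)
    have hpos : 0 < Ssum x (N - n) := Ssum_pos hdec hmean (N - n) (by omega) (by omega)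
    refine ⟨by rw [hS]; exact hpos, ?_⟩
    have hrec := x_step hMIW (N - n) (by omega) (by omega)
    have e1 : N + 1 - (n + 1) = N - n := by omega
    have e2 : N + 1 - n = (N - n) + 1 := by omega
    show - x (N + 1 - (n + 1)) = - x (N + 1 - n) - 1 / Ssum z n
    rw [e1, e2, hrec, hS]
    ring
  have hzN : Ssum z N = 0 := by
    rw [hzS N le_rfl]
    simp [Ssum_zero]
  rcases lt_trichotomy (x 1) (z 1) with h | h | h
  · exfalso
    have := (comp_strict N x z hxprop hzprop h N (by omega) le_rfl).2
    rw [hmean, hzN] at this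
    exact lt_irrefl 0 this
  · intro n h1 h2
    have := (comp_eq N x z hxprop hzprop h n h1 h2).1
    rw [hz] at this
    simp only at this
    linarith [this]
  · exfalso
    have := (comp_strict N z x hzprop hxprop h N (by omega) le_rfl).2
    rw [hmean, hzN] at this
    exact lt_irrefl 0 this

lemma sum_Icc_split (f : ℕ → ℝ) (n M : ℕ) (hn : n ≤ M) :
    ∑ i ∈ Finset.Icc 1 M, f i = (∑ i ∈ Finset.Icc 1 n, f i) + ∑ i ∈ Finset.Ioc n M, f i := by
  have e : ∀ k : ℕ, Finset.Icc 1 k = Finset.Ioc 0 k := fun k => Finset.Icc_add_one_left_eq_Ioc 0 k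
  rw [e M, e n]
  exact (Finset.sum_Ioc_consecutive f (Nat.zero_le n) hn).symm

lemma xm_nonneg (hN : 100 < N) (hMIW : IsMIW N x)
    (hdec : ∀ n, 1 ≤ n → n < N → x (n + 1) < x n) (hmean : Ssum x N = 0) :
    0 ≤ x (mIdx N) := by
  have hm : 2 * mIdx N = N ∨ 2 * mIdx N = N + 1 := by unfold mIdx; omega
  have hm1 : 1 ≤ mIdx N := by unfold mIdx; omega
  have hmN : mIdx N + 1 ≤ N := by unfold mIdx; omega
  rcases hm with h | h
  · -- N even, x (m+1) = - x m and x (m+1) < x m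
    have ha := antisym (by omega) hMIW hdec hmean (mIdx N) hm1 (by omega)
    have e : N + 1 - mIdx N = mIdx N + 1 := by omega
    rw [e] at ha
    have := hdec (mIdx N) hm1 (by omega)
    linarith
  · -- N odd, x m = - x m
    have ha := antisym (by omega) hMIW hdec hmean (mIdx N) hm1 (by omega)
    have e : N + 1 - mIdx N = mIdx N := by omega
    rw [e] at ha
    linarith

lemma x_nonneg_first_half (hN : 100 < N) (hMIW : IsMIW N x)
    (hdec : ∀ n, 1 ≤ n → n < N → x (n + 1) < x n) (hmean : Ssum x N = 0) :
    ∀ n, 1 ≤ n → n ≤ mIdx N → 0 ≤ x n := by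
  intro n h1 h2
  have := xm_nonneg hN hMIW hdec hmean
  have hmN : mIdx N ≤ N := by unfold mIdx; omega
  have := x_anti hdec n (mIdx N) h1 h2 hmN
  linarith

lemma half_sq (hN : 100 < N) (hMIW : IsMIW N x)
    (hdec : ∀ n, 1 ≤ n → n < N → x (n + 1) < x n) (hmean : Ssum x N = 0) :
    2 * ∑ i ∈ Finset.Icc 1 (mIdx N), x i ^ 2 = (N : ℝ) - 1 := by
  have hmdef : mIdx N = (N + 1) / 2 := rfl
  set m := mIdx N with hm'
  have hm : 2 * m = N ∨ 2 * m = N + 1 := by omega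
  have hm1 : 1 ≤ m := by omega
  have hmN : m + 1 ≤ N := by omega
  have htot := total_sq hMIW hdec hmean (by omega)
  have hsplit := sum_Icc_split (fun i => x i ^ 2) m N (by omega)
  have hrefl := sum_reflect (fun i => x i ^ 2) m N (by omega)
  have hcongr : ∑ j ∈ Finset.Icc 1 (N - m), x (N + 1 - j) ^ 2
      = ∑ j ∈ Finset.Icc 1 (N - m), x j ^ 2 := by
    apply Finset.sum_congr rfl
    intro j hj
    rw [Finset.mem_Icc] at hj
    have ha := antisym (by omega) hMIW hdec hmean j hj.1 (by omega)
    rw [ha]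
    ring
  rcases hm with h | h
  · -- N even : N - m = m
    have e : N - m = m := by omega
    rw [e] at hrefl hcongr
    rw [hsplit, hrefl, hcongr] at htot
    linarith
  · -- N odd : N - m = m - 1, x m = 0
    have e : N - m = m - 1 := by omega
    have hxm : x m = 0 := by
      have ha := antisym (by omega) hMIW hdec hmean m hm1 (by omega)
      have e2 : N + 1 - m = m := by omega
      rw [e2] at ha
      linarith
    have hstep : ∑ i ∈ Finset.Icc 1 m, x i ^ 2
        = (∑ i ∈ Finset.Icc 1 (m - 1), x i ^ 2) + x m ^ 2 := by
      have e3 : m = (m - 1) + 1 := by omega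
      rw [e3]
      exact Finset.sum_Icc_succ_top (by omega) _
    rw [e] at hrefl hcongr
    rw [hsplit, hrefl, hcongr] at htot
    rw [hxm] at hstep
    simp at hstep
    rw [hstep] at htot
    linarith

/-- One step of the monotone quantity `log S_n + x_n²/2`. -/
lemma R_step (hMIW : IsMIW N x) (hdec : ∀ n, 1 ≤ n → n < N → x (n + 1) < x n)
    (hmean : Ssum x N = 0) (n : ℕ) (h1 : 1 ≤ n) (h2 : n + 2 ≤ N) :
    Real.log (Ssum x (n + 1)) + x (n + 1) ^ 2 / 2
      ≤ Real.log (Ssum x n) + x n ^ 2 / 2 := by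
  have hSn := Ssum_pos hdec hmean n h1 (by omega)
  have hSn1 := Ssum_pos hdec hmean (n + 1) (by omega) (by omega)
  have hlog : Real.log (Ssum x (n + 1)) - Real.log (Ssum x n) ≤ x (n + 1) / Ssum x n := by
    rw [← Real.log_div (ne_of_gt hSn1) (ne_of_gt hSn)]
    have h := Real.log_le_sub_one_of_pos (div_pos hSn1 hSn)
    have e : Ssum x (n + 1) / Ssum x n - 1 = x (n + 1) / Ssum x n := by
      rw [Ssum_succ]
      field_simp
      ring
    linarith
  have hdrop := sq_drop hMIW hdec hmean n h1 (by omega)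
  have hxlt : x (n + 1) < x n := hdec n h1 (by omega)
  have hkey : x (n + 1) / Ssum x n - (x n + x (n + 1)) / (2 * Ssum x n) ≤ 0 := by
    rw [div_sub_div _ _ (ne_of_gt hSn) (by positivity)]
    exact div_nonpos_iff.2 (Or.inr ⟨by nlinarith, by positivity⟩)
  have hd2 : (x n + x (n + 1)) / (2 * Ssum x n) = (x n ^ 2 - x (n + 1) ^ 2) / 2 := by
    rw [hdrop]
    ring
  linarith [hlog, hkey, hd2]

lemma R_mono (hMIW : IsMIW N x) (hdec : ∀ n, 1 ≤ n → n < N → x (n + 1) < x n)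
    (hmean : Ssum x N = 0) :
    ∀ a b, 1 ≤ a → a ≤ b → b + 1 ≤ N →
      Real.log (Ssum x b) + x b ^ 2 / 2 ≤ Real.log (Ssum x a) + x a ^ 2 / 2 := by
  intro a b ha hab hbN
  induction b with
  | zero =>
    have : a = 0 := by omega
    omega
  | succ b ih =>
    rcases Nat.eq_or_lt_of_le hab with h | h
    · rw [h]
    · have h1 : a ≤ b := by omega
      have hih := ih h1 (by omega)
      have hstep := R_step hMIW hdec hmean b (by omega) (by omega)
      linarith

/-- Numeric helper : `exp 3 > 20.08`. -/
lemma exp_three_gt : (20.08 : ℝ) < Real.exp 3 := by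
  have h9 := Real.exp_one_gt_d9
  have he : Real.exp 3 = Real.exp 1 ^ 3 := by
    rw [← Real.exp_nat_mul]
    norm_num
  have hcube : (2.7182818283 : ℝ) ^ 3 ≤ Real.exp 1 ^ 3 :=
    pow_le_pow_left₀ (by norm_num) h9.le 3
  rw [he]
  nlinarith [hcube]

/-- Numeric helper : `√2 ≤ 1.41422`. -/
lemma sqrt_two_le : Real.sqrt 2 ≤ 1.41422 := by
  rw [show (1.41422 : ℝ) = Real.sqrt (1.41422 ^ 2) from (Real.sqrt_sq (by norm_num)).symm]
  exact Real.sqrt_le_sqrt (by norm_num)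

/-- Numeric helper : `log 3.25 ≥ 9/13`. -/
lemma log_325_ge : (9 : ℝ) / 13 ≤ Real.log 3.25 := by
  have h := Real.log_le_sub_one_of_pos (show (0 : ℝ) < 4 / 13 by norm_num)
  have hinv : Real.log ((4 : ℝ) / 13) = - Real.log (13 / 4) := by
    rw [show ((4 : ℝ) / 13) = ((13 : ℝ) / 4)⁻¹ by norm_num, Real.log_inv]
  rw [hinv] at h
  have : ((3.25 : ℝ)) = 13 / 4 := by norm_num
  rw [this]
  linarith [h]

/-- Numeric helper : `log 2.18422 - log 3.25 ≤ -0.32`. -/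
lemma log_diff_le : Real.log 2.18422 - Real.log 3.25 ≤ -(0.32 : ℝ) := by
  have h := Real.log_le_sub_one_of_pos (show (0 : ℝ) < 2.18422 / 3.25 by norm_num)
  rw [Real.log_div (by norm_num) (by norm_num)] at h
  have e : (2.18422 : ℝ) / 3.25 - 1 ≤ -(0.32 : ℝ) := by norm_num
  linarith

/-- Numeric helper : `log (3/2) ≤ 0.44`. -/
lemma log_three_half_le : Real.log (3 / 2) ≤ (0.44 : ℝ) := by
  have h4 : Real.exp (0.44 : ℝ) = Real.exp (0.11 : ℝ) ^ 4 := by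
    rw [← Real.exp_nat_mul]
    norm_num
  have h1 : (1.11 : ℝ) ≤ Real.exp (0.11 : ℝ) := by
    have := Real.add_one_le_exp (0.11 : ℝ)
    linarith
  have h2 : (3 / 2 : ℝ) ≤ Real.exp (0.44 : ℝ) := by
    rw [h4]
    calc (3 / 2 : ℝ) ≤ (1.11 : ℝ) ^ 4 := by norm_num
      _ ≤ Real.exp (0.11 : ℝ) ^ 4 := pow_le_pow_left₀ (by norm_num) h1 4
  calc Real.log (3 / 2) ≤ Real.log (Real.exp (0.44 : ℝ)) :=
        Real.log_le_log (by norm_num) h2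
    _ = (0.44 : ℝ) := Real.log_exp _

set_option maxHeartbeats 1000000 in
/-- Main lower bound: `x n ≥ 0.77` for `n` with `(n+1)·e³ ≤ m`, plus `x 1 ≥ 1`. -/
lemma x_lower (hN : 100 < N) (hMIW : IsMIW N x)
    (hdec : ∀ n, 1 ≤ n → n < N → x (n + 1) < x n) (hmean : Ssum x N = 0)
    (n : ℕ) (hn : 1 ≤ n) (hnm : ((n : ℝ) + 1) * Real.exp 3 ≤ (mIdx N : ℝ)) :
    77 / 100 ≤ x n ∧ 1 ≤ x 1 := by
  have hmdef : mIdx N = (N + 1) / 2 := rfl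
  set m := mIdx N with hm'
  have hm1 : 1 ≤ m := by omega
  have hmN : m + 1 ≤ N := by omega
  have hNm : 2 * m ≤ N + 1 ∧ N ≤ 2 * m := by omega
  have he3 := exp_three_gt
  have hnR : (1 : ℝ) ≤ (n : ℝ) := by exact_mod_cast hn
  have hn1m : ((n : ℝ) + 1) * 20.08 ≤ (m : ℝ) := by
    have : ((n : ℝ) + 1) * 20.08 ≤ ((n : ℝ) + 1) * Real.exp 3 := by nlinarith
    linarith
  have hn1mNat : n + 1 < m := by
    have h : ((n + 1 : ℕ) : ℝ) < (m : ℝ) := by push_cast; nlinarith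
    exact_mod_cast h
  have hhalf := half_sq hN hMIW hdec hmean
  have hpos_half := x_nonneg_first_half hN hMIW hdec hmean
  have hNR : (101 : ℝ) ≤ (N : ℝ) := by exact_mod_cast hN
  have hmR : (2 : ℝ) * m ≤ (N : ℝ) + 1 := by exact_mod_cast hNm.1
  have hmR2 : (N : ℝ) ≤ 2 * m := by exact_mod_cast hNm.2
  -- Step 1 : x 1 ≥ 13/20
  have hx1_65 : 13 / 20 ≤ x 1 := by
    by_contra hc
    push_neg at hc
    have hbound : ∀ i ∈ Finset.Icc 1 m, x i ^ 2 ≤ 169 / 400 := by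
      intro i hi
      rw [Finset.mem_Icc] at hi
      have h0 := hpos_half i hi.1 hi.2
      have h1 := x_anti hdec 1 i le_rfl hi.1 (by omega)
      nlinarith
    have hsum : ∑ i ∈ Finset.Icc 1 m, x i ^ 2 ≤ (m : ℝ) * (169 / 400) := by
      calc ∑ i ∈ Finset.Icc 1 m, x i ^ 2 ≤ ∑ _i ∈ Finset.Icc 1 m, (169 / 400 : ℝ) :=
            Finset.sum_le_sum hbound
        _ = (m : ℝ) * (169 / 400) := by
            rw [Finset.sum_const, Nat.card_Icc]
            simp
    linarith
  -- Step 2 : the threshold index nstar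
  have hP1 : 1 ∈ (Finset.Icc 1 m).filter (fun k => 13 / 20 ≤ x k) := by
    rw [Finset.mem_filter, Finset.mem_Icc]
    exact ⟨⟨le_rfl, hm1⟩, hx1_65⟩
  set P := (Finset.Icc 1 m).filter (fun k => 13 / 20 ≤ x k) with hPdef
  have hPne : P.Nonempty := ⟨1, hP1⟩
  set ns := P.max' hPne with hnsdef
  have hns_mem : ns ∈ P := P.max'_mem hPne
  have hns_range : 1 ≤ ns ∧ ns ≤ m := by
    have := hns_mem
    rw [hPdef, Finset.mem_filter, Finset.mem_Icc] at this
    exact this.1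
  have hxns : 13 / 20 ≤ x ns := by
    have := hns_mem
    rw [hPdef, Finset.mem_filter] at this
    exact this.2
  have hns1 : 1 ≤ ns := hns_range.1
  have hnsm : ns ≤ m := hns_range.2
  have hnsR : (1 : ℝ) ≤ (ns : ℝ) := by exact_mod_cast hns1
  have hnsN : ns + 1 ≤ N := by omega
  have hSns_pos := Ssum_pos hdec hmean ns hns1 hnsN
  have hSns_ge : (ns : ℝ) * x ns ≤ Ssum x ns := Ssum_ge_card_mul hdec ns (by omega)
  have hSns_low : (13 / 20 : ℝ) * ns ≤ Ssum x ns := by nlinarith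
  -- Step 3 : count bound : 5 n ≤ ns
  have hcount : (5 : ℝ) * n ≤ (ns : ℝ) := by
    rcases eq_or_lt_of_le hnsm with he | hlt
    · rw [he]
      linarith
    · have hxns1 : x (ns + 1) < 13 / 20 := by
        by_contra hcon
        push_neg at hcon
        have hmem : ns + 1 ∈ P := by
          rw [hPdef, Finset.mem_filter, Finset.mem_Icc]
          exact ⟨⟨by omega, by omega⟩, hcon⟩
        have := P.le_max' (ns + 1) hmem
        omega
      have hrec := x_step hMIW ns hns1 hnsN
      have hinv : 1 / Ssum x ns ≤ 1 / ((13 / 20 : ℝ) * ns) :=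
        one_div_le_one_div_of_le (by positivity) hSns_low
      have hxns_up : x ns ≤ 13 / 20 + 1 / ((13 / 20 : ℝ) * ns) := by
        have : x ns = x (ns + 1) + 1 / Ssum x ns := by rw [hrec]; ring
        linarith
      have hsumsq := sumsq_le hMIW hdec hmean ns hns1 hnsN
      have htail : ∑ i ∈ Finset.Ioc ns m, x i ^ 2 ≤ ((m : ℝ) - ns) * (169 / 400) := by
        have hterm : ∀ i ∈ Finset.Ioc ns m, x i ^ 2 ≤ 169 / 400 := by
          intro i hi
          rw [Finset.mem_Ioc] at hi
          have h0 := hpos_half i (by omega) hi.2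
          have h1 := x_anti hdec (ns + 1) i (by omega) (by omega) (by omega)
          nlinarith
        calc ∑ i ∈ Finset.Ioc ns m, x i ^ 2 ≤ ∑ _i ∈ Finset.Ioc ns m, (169 / 400 : ℝ) :=
              Finset.sum_le_sum hterm
          _ = ((m : ℝ) - ns) * (169 / 400) := by
              rw [Finset.sum_const, Nat.card_Ioc, nsmul_eq_mul,
                Nat.cast_sub (by omega : ns ≤ m)]
      have hsplit := sum_Icc_split (fun i => x i ^ 2) ns m (by omega)
      have hkey : (ns : ℝ) * x ns ^ 2 ≤ (169 / 400) * ns + 2 + 400 / 169 := by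
        have hnspos : (0 : ℝ) < (ns : ℝ) := by linarith
        have hxnsnn : (0 : ℝ) ≤ x ns := by linarith
        have hup2 : x ns * x ns ≤ (13 / 20 + 1 / ((13 / 20 : ℝ) * ns)) *
            (13 / 20 + 1 / ((13 / 20 : ℝ) * ns)) :=
          mul_le_mul hxns_up hxns_up hxnsnn (by positivity)
        have hexp : (ns : ℝ) * ((13 / 20 + 1 / ((13 / 20 : ℝ) * ns)) *
            (13 / 20 + 1 / ((13 / 20 : ℝ) * ns)))
            = (169 / 400) * ns + 2 + (400 / 169) * (1 / ns) := by
          field_simp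
          ring
        have hinv1 : (1 : ℝ) / ns ≤ 1 := by
          rw [div_le_one hnspos]
          exact hnsR
        nlinarith [hup2, hexp, hinv1]
      -- combine everything
      have hcomb : (N : ℝ) - 1 ≤ 4 * ns + 800 / 169 + (169 / 200) * m := by
        have e1 : ∑ i ∈ Finset.Icc 1 m, x i ^ 2
            = (∑ i ∈ Finset.Icc 1 ns, x i ^ 2) + ∑ i ∈ Finset.Ioc ns m, x i ^ 2 := hsplit
        linarith [hhalf, hsumsq, htail, hkey, e1]
      linarith [hcomb, hn1m, hmR2]
  have hnleqns : n ≤ ns := by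
    have : (n : ℝ) ≤ (ns : ℝ) := by linarith
    exact_mod_cast this
  -- Step 4 : the R-chain from n to ns
  have hchain := R_mono hMIW hdec hmean n ns hn hnleqns hnsN
  have hlow : Real.log ((13 / 4 : ℝ) * n) + 169 / 800
      ≤ Real.log (Ssum x n) + x n ^ 2 / 2 := by
    have h1 : Real.log ((13 / 4 : ℝ) * n) ≤ Real.log (Ssum x ns) := by
      apply Real.log_le_log (by positivity)
      calc (13 / 4 : ℝ) * n = (13 / 20) * (5 * n) := by ring
        _ ≤ (13 / 20) * ns := by linarith
        _ ≤ Ssum x ns := hSns_low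
    have h2 : (169 / 800 : ℝ) ≤ x ns ^ 2 / 2 := by nlinarith
    linarith [hchain]
  constructor
  · -- x n ≥ 77/100
    by_contra hc
    push_neg at hc
    have hxn0 : 0 ≤ x n := hpos_half n hn (by omega)
    have hSup := Ssum_upper hMIW hdec hmean n hn (by omega) hxn0
    have hSn_pos := Ssum_pos hdec hmean n hn (by omega)
    have hsq2 := sqrt_two_le
    have hup : Ssum x n ≤ (2.18422 : ℝ) * n := by nlinarith
    have hlogup : Real.log (Ssum x n) ≤ Real.log ((2.18422 : ℝ) * n) :=
      Real.log_le_log hSn_pos hup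
    have hxnsq : x n ^ 2 / 2 ≤ 5929 / 20000 := by nlinarith
    have e1 : Real.log ((13 / 4 : ℝ) * n) = Real.log (13 / 4) + Real.log n := by
      rw [Real.log_mul (by norm_num) (by positivity)]
    have e2 : Real.log ((2.18422 : ℝ) * n) = Real.log 2.18422 + Real.log n := by
      rw [Real.log_mul (by norm_num) (by positivity)]
    have hld := log_diff_le
    have e3 : (3.25 : ℝ) = 13 / 4 := by norm_num
    rw [e3] at hld
    linarith [hlow, hlogup, hxnsq, e1, e2, hld]
  · -- x 1 ≥ 1
    by_contra hc
    push_neg at hc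
    have hchain1 := R_mono hMIW hdec hmean 1 ns le_rfl hns1 hnsN
    have hlow1 : Real.log (13 / 4 : ℝ) + 169 / 800
        ≤ Real.log (Ssum x 1) + x 1 ^ 2 / 2 := by
      have h1 : Real.log ((13 / 4 : ℝ)) ≤ Real.log (Ssum x ns) := by
        apply Real.log_le_log (by norm_num)
        calc (13 / 4 : ℝ) = (13 / 20) * 5 := by ring
          _ ≤ (13 / 20) * ns := by nlinarith
          _ ≤ Ssum x ns := hSns_low
      have h2 : (169 / 800 : ℝ) ≤ x ns ^ 2 / 2 := by nlinarith
      linarith [hchain1]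
    have hx1pos : 0 < x 1 := by linarith
    have hlogneg : Real.log (Ssum x 1) < 0 := by
      rw [Ssum_one]
      exact Real.log_neg hx1pos hc
    have hsq : x 1 ^ 2 / 2 < 1 / 2 := by nlinarith
    have h325 := log_325_ge
    have e3 : (3.25 : ℝ) = 13 / 4 := by norm_num
    rw [e3] at h325
    linarith

set_option maxHeartbeats 1000000 in
/-- Per-step inequality : `x n² - x (n+1)² ≥ (4/9)(log (n+1) - log n)`. -/
lemma per_term (hN : 100 < N) (hMIW : IsMIW N x)
    (hdec : ∀ n, 1 ≤ n → n < N → x (n + 1) < x n) (hmean : Ssum x N = 0)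
    (n : ℕ) (hn : 1 ≤ n) (hnm : ((n : ℝ) + 1) * Real.exp 3 ≤ (mIdx N : ℝ)) :
    (4 / 9) * (Real.log ((n : ℝ) + 1) - Real.log n) ≤ x n ^ 2 - x (n + 1) ^ 2 := by
  obtain ⟨hx77, hx1⟩ := x_lower hN hMIW hdec hmean n hn hnm
  have hmdef : mIdx N = (N + 1) / 2 := rfl
  have hmN : mIdx N + 1 ≤ N := by omega
  have he3 := exp_three_gt
  have hnR : (1 : ℝ) ≤ (n : ℝ) := by exact_mod_cast hn
  have hn1m : ((n : ℝ) + 1) * 20.08 ≤ (mIdx N : ℝ) := by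
    have : ((n : ℝ) + 1) * 20.08 ≤ ((n : ℝ) + 1) * Real.exp 3 := by nlinarith
    linarith
  have hn1mNat : n + 1 < mIdx N := by
    have h : ((n + 1 : ℕ) : ℝ) < (mIdx N : ℝ) := by push_cast; nlinarith
    exact_mod_cast h
  have hnN : n + 1 ≤ N := by omega
  have hS := Ssum_pos hdec hmean n hn hnN
  have hstep := x_step hMIW n hn hnN
  have hdropEq := sq_drop hMIW hdec hmean n hn hnN
  rcases Nat.lt_or_ge n 2 with h2 | h2
  · -- n = 1
    have hn1 : n = 1 := by omega
    subst hn1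
    have hx1pos : (0 : ℝ) < x 1 := by linarith
    have hx1ne : x 1 ≠ 0 := ne_of_gt hx1pos
    have hS1 : Ssum x 1 = x 1 := Ssum_one x
    have e : x 1 ^ 2 - x (1 + 1) ^ 2 = 2 - (1 / x 1) ^ 2 := by
      rw [hstep, hS1]
      field_simp
      ring
    have hlog2 : Real.log 2 ≤ 1 := by
      have := Real.log_le_sub_one_of_pos (show (0 : ℝ) < 2 by norm_num)
      linarith
    have hinv : (1 / x 1) ^ 2 ≤ 1 := by
      have h1 : 1 / x 1 ≤ 1 := by rw [div_le_one hx1pos]; exact hx1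
      have h0 : (0 : ℝ) ≤ 1 / x 1 := by positivity
      nlinarith
    simp only [Nat.cast_one, Real.log_one]
    have e2 : (1 : ℝ) + 1 = 2 := by norm_num
    rw [e2, e]
    linarith
  · -- n ≥ 2
    have hn2R : (2 : ℝ) ≤ (n : ℝ) := by exact_mod_cast h2
    have hxpos : (0 : ℝ) < x n := by linarith
    have hSlow : (n : ℝ) * x n ≤ Ssum x n := Ssum_ge_card_mul hdec n (by omega)
    have hxn0 : (0 : ℝ) ≤ x n := le_of_lt hxpos
    have hSup := Ssum_upper hMIW hdec hmean n hn hnN hxn0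
    have hsq2 := sqrt_two_le
    have hsq2nn : (0 : ℝ) ≤ Real.sqrt 2 := Real.sqrt_nonneg 2
    have hinvS : 1 / Ssum x n ≤ 1 / ((n : ℝ) * x n) :=
      one_div_le_one_div_of_le (by positivity) hSlow
    have hnum_low : 2 * x n - 1 / ((n : ℝ) * x n) ≤ x n + x (n + 1) := by
      have : x n - 1 / ((n : ℝ) * x n) ≤ x (n + 1) := by rw [hstep]; linarith
      linarith
    have hxinv : (n : ℝ) * x n * (1 / ((n : ℝ) * x n)) = 1 := by field_simp
    have hlogeq : Real.log ((n : ℝ) + 1) - Real.log n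
        = Real.log (((n : ℝ) + 1) / n) := by
      rw [Real.log_div (by positivity) (by positivity)]
    have hSnn : (0 : ℝ) ≤ Ssum x n := hS.le
    rw [hdropEq, hlogeq, le_div_iff₀ hS]
    -- goal : 4/9 * log ((n+1)/n) * Ssum x n ≤ x n + x (n+1)
    rcases Nat.lt_or_ge n 3 with h3 | h3
    · -- n = 2
      have hn2 : n = 2 := by omega
      subst hn2
      have ecast : ((2 : ℕ) : ℝ) = 2 := by norm_num
      rw [ecast] at hSup hnum_low hxinv ⊢
      have eL : ((2 : ℝ) + 1) / 2 = 3 / 2 := by norm_num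
      rw [eL]
      have hL := log_three_half_le
      have hLnn : (0 : ℝ) ≤ Real.log (3 / 2) := Real.log_nonneg (by norm_num)
      have hLS : Real.log (3 / 2) * Ssum x 2 ≤ (0.44 : ℝ) * (2 * x 2 + Real.sqrt 2 * 2) :=
        mul_le_mul hL hSup hSnn (by norm_num)
      nlinarith [hLS, hnum_low, hxinv, hx77, hsq2, hxpos]
    · -- n ≥ 3
      have hn3R : (3 : ℝ) ≤ (n : ℝ) := by exact_mod_cast h3
      have hL : Real.log (((n : ℝ) + 1) / n) ≤ 1 / (n : ℝ) := by
        have h := Real.log_le_sub_one_of_pos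
          (show (0 : ℝ) < ((n : ℝ) + 1) / n by positivity)
        have e : ((n : ℝ) + 1) / n - 1 = 1 / n := by field_simp; ring
        linarith
      have hLS : Real.log (((n : ℝ) + 1) / n) * Ssum x n
          ≤ (1 / (n : ℝ)) * ((n : ℝ) * x n + Real.sqrt 2 * n) :=
        mul_le_mul hL hSup hSnn (by positivity)
      have hsimp : (1 / (n : ℝ)) * ((n : ℝ) * x n + Real.sqrt 2 * n)
          = x n + Real.sqrt 2 := by
        field_simp
      rw [hsimp] at hLS
      have hinv3 : 1 / ((n : ℝ) * x n) ≤ 1 / (3 * x n) :=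
        one_div_le_one_div_of_le (by positivity) (by nlinarith)
      have h3x : 3 * x n * (1 / (3 * x n)) = 1 := by field_simp
      have hfinal : 4 / 9 * (x n + Real.sqrt 2) ≤ 2 * x n - 1 / (3 * x n) := by
        nlinarith [h3x, hx77, hsq2, hxpos]
      linarith [hLS, hfinal, hnum_low, hinv3]

end MIWAux

set_option maxHeartbeats 1000000 in
/-- For the unique strictly decreasing zero-mean solution of the MIW recursion with
`N > 100`, for `1 ≤ l < j ≤ ⌊m/e³⌋` one has `x_l² - x_j² ≥ (4/9) log(j/l)`. -/
theorem xsq_diff_lower_bound (N : ℕ) (hN : 100 < N) (x : ℕ → ℝ)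
    (hMIW : IsMIW N x) (hdec : ∀ n, 1 ≤ n → n < N → x (n + 1) < x n)
    (hmean : ∑ i ∈ Finset.Icc 1 N, x i = 0) :
    ∀ l j : ℕ, 1 ≤ l → l < j → j ≤ Nat.floor ((mIdx N : ℝ) / Real.exp 3) →
      x l ^ 2 - x j ^ 2 ≥ (4 / 9) * Real.log ((j : ℝ) / (l : ℝ)) := by
  intro l j hl hlj hjJ
  have hmean' : Ssum x N = 0 := hmean
  have hexp_pos : (0 : ℝ) < Real.exp 3 := Real.exp_pos 3
  have hjm : (j : ℝ) ≤ (mIdx N : ℝ) / Real.exp 3 := by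
    have h0 : (0 : ℝ) ≤ (mIdx N : ℝ) / Real.exp 3 := by positivity
    calc (j : ℝ) ≤ (Nat.floor ((mIdx N : ℝ) / Real.exp 3) : ℝ) := by exact_mod_cast hjJ
      _ ≤ _ := Nat.floor_le h0
  have htel1 : ∑ i ∈ Finset.Ico l j, (x i ^ 2 - x (i + 1) ^ 2) = x l ^ 2 - x j ^ 2 := by
    rw [Finset.sum_Ico_eq_sub _ (le_of_lt hlj),
      Finset.sum_range_sub' (fun i => x i ^ 2) j,
      Finset.sum_range_sub' (fun i => x i ^ 2) l]
    ring
  have htel2 : ∑ i ∈ Finset.Ico l j, (Real.log ((i : ℝ) + 1) - Real.log i)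
      = Real.log j - Real.log l := by
    have e1 : ∑ i ∈ Finset.Ico l j, (Real.log ((i : ℝ) + 1) - Real.log i)
        = ∑ i ∈ Finset.Ico l j,
            ((fun k : ℕ => Real.log (k : ℝ)) (i + 1) - (fun k : ℕ => Real.log (k : ℝ)) i) := by
      apply Finset.sum_congr rfl
      intro i _
      simp only
      push_cast
      ring
    rw [e1, Finset.sum_Ico_eq_sub _ (le_of_lt hlj),
      Finset.sum_range_sub (fun k : ℕ => Real.log (k : ℝ)) j,
      Finset.sum_range_sub (fun k : ℕ => Real.log (k : ℝ)) l]
    ring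
  have hterm : ∀ i ∈ Finset.Ico l j,
      (4 / 9) * (Real.log ((i : ℝ) + 1) - Real.log i) ≤ x i ^ 2 - x (i + 1) ^ 2 := by
    intro i hi
    rw [Finset.mem_Ico] at hi
    have hi1 : 1 ≤ i := le_trans hl hi.1
    have hij : ((i : ℝ) + 1) ≤ (j : ℝ) := by
      have : i + 1 ≤ j := hi.2
      exact_mod_cast this
    have hnm : ((i : ℝ) + 1) * Real.exp 3 ≤ (mIdx N : ℝ) := by
      have h1 : ((i : ℝ) + 1) * Real.exp 3 ≤ ((mIdx N : ℝ) / Real.exp 3) * Real.exp 3 := by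
        apply mul_le_mul_of_nonneg_right _ hexp_pos.le
        linarith [hjm, hij]
      rw [div_mul_cancel₀ _ (ne_of_gt hexp_pos)] at h1
      exact h1
    exact MIWAux.per_term hN hMIW hdec hmean' i hi1 hnm
  have hsum_le : ∑ i ∈ Finset.Ico l j, (4 / 9) * (Real.log ((i : ℝ) + 1) - Real.log i)
      ≤ ∑ i ∈ Finset.Ico l j, (x i ^ 2 - x (i + 1) ^ 2) := Finset.sum_le_sum hterm
  rw [← Finset.mul_sum, htel2, htel1] at hsum_le
  have hlog_div : Real.log ((j : ℝ) / (l : ℝ)) = Real.log j - Real.log l :=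
    Real.log_div (Nat.cast_ne_zero.2 (by omega)) (Nat.cast_ne_zero.2 (by omega))
  rw [ge_iff_le, hlog_div]
  exact hsum_le
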